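/- Let A, B, C be three non-collinear points in the Euclidean plane ℝ², forming a triangle T = convexHull{A,B,C}. For θ ∈ [0, π), let w_T(θ) denote the width of T in direction θ, i.e. w_T(θ) = sup{p·(cos θ, sin θ) : p ∈ T} − inf{p·(cos θ, sin θ) : p ∈ T}, the length of the orthogonal projection of T onto a line of direction θ. Then ∫₀^π w_T(θ) dθ = dist(A,B) + dist(B,C) + dist(C,A), i.e. the integral of the projection length over all directions equals the perimeter of the triangle. -/

import Mathlib

open Real

/-- The unit vector in direction `θ` in the Euclidean plane. -/
noncomputable def dir (θ : ℝ) : EuclideanSpace ℝ (Fin 2) :=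
  (WithLp.equiv 2 (Fin 2 → ℝ)).symm ![Real.cos θ, Real.sin θ]

/-- The width of a set `K ⊆ ℝ²` in direction `θ`: the length of the orthogonal
projection of `K` onto a line of direction `θ`. -/
noncomputable def width (K : Set (EuclideanSpace ℝ (Fin 2))) (θ : ℝ) : ℝ :=
  sSup ((fun p => (inner ℝ p (dir θ) : ℝ)) '' K) - sInf ((fun p => (inner ℝ p (dir θ) : ℝ)) '' K)

lemma inner_dir (v : EuclideanSpace ℝ (Fin 2)) (θ : ℝ) :
    (inner ℝ v (dir θ) : ℝ) = v 0 * Real.cos θ + v 1 * Real.sin θ := by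
  simp [dir, PiLp.inner_apply, Fin.sum_univ_two, WithLp.equiv_symm_apply,
    RCLike.inner_apply, mul_comm]

lemma max_sub_min (a b c : ℝ) :
    max a (max b c) - min a (min b c) = (|a - b| + |b - c| + |c - a|) / 2 := by
  rcases abs_cases (a - b) with ⟨e1, h1⟩ | ⟨e1, h1⟩ <;>
  rcases abs_cases (b - c) with ⟨e2, h2⟩ | ⟨e2, h2⟩ <;>
  rcases abs_cases (c - a) with ⟨e3, h3⟩ | ⟨e3, h3⟩ <;>
  rw [e1, e2, e3] <;> simp only [max_def, min_def] <;> split_ifs <;> linarith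

lemma convexHull_triple (a b c : ℝ) :
    convexHull ℝ ({a, b, c} : Set ℝ) = Set.Icc (min a (min b c)) (max a (max b c)) := by
  apply Set.Subset.antisymm
  · apply convexHull_min _ (convex_Icc _ _)
    intro x hx
    rcases hx with rfl | rfl | rfl
    · exact ⟨min_le_left _ _, le_max_left _ _⟩
    · exact ⟨le_trans (min_le_right _ _) (min_le_left _ _),
        le_trans (le_max_left _ _) (le_max_right _ _)⟩
    · exact ⟨le_trans (min_le_right _ _) (min_le_right _ _),
        le_trans (le_max_right _ _) (le_max_right _ _)⟩
  · have hlo : min a (min b c) ∈ ({a, b, c} : Set ℝ) := by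
      rcases min_cases b c with ⟨e, he⟩ | ⟨e, he⟩ <;>
      rcases min_cases a (min b c) with ⟨e2, he2⟩ | ⟨e2, he2⟩ <;>
      rw [e2] <;> simp [e]
    have hhi : max a (max b c) ∈ ({a, b, c} : Set ℝ) := by
      rcases max_cases b c with ⟨e, he⟩ | ⟨e, he⟩ <;>
      rcases max_cases a (max b c) with ⟨e2, he2⟩ | ⟨e2, he2⟩ <;>
      rw [e2] <;> simp [e]
    rw [← segment_eq_Icc (le_trans (min_le_left _ _) (le_max_left _ _))]
    exact (convex_convexHull ℝ _).segment_subset (subset_convexHull ℝ _ hlo)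
      (subset_convexHull ℝ _ hhi)

lemma width_triangle (A B C : EuclideanSpace ℝ (Fin 2)) (θ : ℝ) :
    width (convexHull ℝ {A, B, C}) θ =
      (|(inner ℝ (A - B) (dir θ) : ℝ)| + |(inner ℝ (B - C) (dir θ) : ℝ)| +
        |(inner ℝ (C - A) (dir θ) : ℝ)|) / 2 := by
  set u := dir θ
  have hf : (fun p : EuclideanSpace ℝ (Fin 2) => (inner ℝ p u : ℝ)) =
      ⇑((innerSL ℝ u).toLinearMap) := by
    funext p
    simp only [ContinuousLinearMap.coe_coe, innerSL_apply_apply]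
    exact real_inner_comm u p
  have himg : (fun p : EuclideanSpace ℝ (Fin 2) => (inner ℝ p u : ℝ)) ''
      (convexHull ℝ {A, B, C}) =
      convexHull ℝ ({(inner ℝ A u : ℝ), (inner ℝ B u : ℝ), (inner ℝ C u : ℝ)} : Set ℝ) := by
    rw [hf, LinearMap.image_convexHull]
    congr 1
    simp only [Set.image_insert_eq, Set.image_singleton, ContinuousLinearMap.coe_coe,
      innerSL_apply_apply]
    rw [real_inner_comm u A, real_inner_comm u B, real_inner_comm u C]
  set a := (inner ℝ A u : ℝ)
  set b := (inner ℝ B u : ℝ)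
  set c := (inner ℝ C u : ℝ)
  have hle : min a (min b c) ≤ max a (max b c) :=
    le_trans (min_le_left _ _) (le_max_left _ _)
  rw [width, himg, convexHull_triple, csSup_Icc hle, csInf_Icc hle, max_sub_min,
    inner_sub_left, inner_sub_left, inner_sub_left]

lemma integral_abs_cos_shift (φ : ℝ) :
    ∫ θ in (0:ℝ)..π, |Real.cos (θ - φ)| = 2 := by
  have h1 : ∫ θ in (0:ℝ)..π, |Real.cos (θ - φ)| =
      ∫ t in (0 - φ)..(π - φ), |Real.cos t| :=
    intervalIntegral.integral_comp_sub_right (fun t => |Real.cos t|) φ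
  have hper : Function.Periodic (fun t => |Real.cos t|) π := by
    intro x
    simp [Real.cos_add_pi]
  have h2 : ∫ t in (0 - φ)..(π - φ), |Real.cos t| =
      ∫ t in (-(π/2))..(-(π/2) + π), |Real.cos t| := by
    have := hper.intervalIntegral_add_eq (0 - φ) (-(π/2))
    rw [show (0 - φ) + π = π - φ by ring] at this
    exact this
  have h3 : ∫ t in (-(π/2))..(-(π/2) + π), |Real.cos t| =
      ∫ t in (-(π/2))..(π/2), Real.cos t := by
    rw [show (-(π/2) + π) = π/2 by ring]
    apply intervalIntegral.integral_congr
    intro x hx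
    rw [Set.uIcc_of_le (by linarith [Real.pi_pos])] at hx
    exact abs_of_nonneg (Real.cos_nonneg_of_mem_Icc hx)
  rw [h1, h2, h3, integral_cos]
  norm_num

lemma integral_abs_inner (v : EuclideanSpace ℝ (Fin 2)) :
    ∫ θ in (0:ℝ)..π, |(inner ℝ v (dir θ) : ℝ)| = 2 * ‖v‖ := by
  by_cases hv : v = 0
  · simp [hv]
  · set z : ℂ := ⟨v 0, v 1⟩ with hz
    have hz0 : z ≠ 0 := by
      intro hzz
      apply hv
      have h0 : v 0 = 0 := congrArg Complex.re hzz
      have h1 : v 1 = 0 := congrArg Complex.im hzz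
      ext i
      fin_cases i <;> simpa [h0, h1]
    have hnorm : ‖v‖ = ‖z‖ := by
      rw [EuclideanSpace.norm_eq, Complex.norm_def, Complex.normSq_apply]
      simp [Fin.sum_univ_two, hz, sq_abs]
      ring_nf
    have habs : ‖z‖ ≠ 0 := norm_ne_zero_iff.mpr hz0
    have hcos : v 0 = ‖z‖ * Real.cos z.arg := by
      rw [Complex.cos_arg hz0]
      field_simp [hz]
      rfl
    have hsin : v 1 = ‖z‖ * Real.sin z.arg := by
      rw [Complex.sin_arg]
      field_simp [hz]
      rfl
    have key : ∀ θ, (inner ℝ v (dir θ) : ℝ) = ‖z‖ * Real.cos (θ - z.arg) := by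
      intro θ
      rw [inner_dir, hcos, hsin, Real.cos_sub]
      ring
    calc ∫ θ in (0:ℝ)..π, |(inner ℝ v (dir θ) : ℝ)|
        = ∫ θ in (0:ℝ)..π, ‖z‖ * |Real.cos (θ - z.arg)| := by
          apply intervalIntegral.integral_congr
          intro x _
          simp only [key, abs_mul, abs_of_nonneg (norm_nonneg z)]
      _ = ‖z‖ * ∫ θ in (0:ℝ)..π, |Real.cos (θ - z.arg)| := by
          rw [intervalIntegral.integral_const_mul]
      _ = 2 * ‖v‖ := by rw [integral_abs_cos_shift, hnorm]; ring

lemma intble_abs_inner (v : EuclideanSpace ℝ (Fin 2)) :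
    IntervalIntegrable (fun θ => |(inner ℝ v (dir θ) : ℝ)|) MeasureTheory.volume 0 π := by
  apply Continuous.intervalIntegrable
  have : (fun θ => (inner ℝ v (dir θ) : ℝ)) =
      fun θ => v 0 * Real.cos θ + v 1 * Real.sin θ := funext (inner_dir v)
  rw [show (fun θ => |(inner ℝ v (dir θ) : ℝ)|) =
      fun θ => |v 0 * Real.cos θ + v 1 * Real.sin θ| by
    funext θ; rw [inner_dir]]
  fun_prop

/-- The integral over all directions `θ ∈ [0, π)` of the projection length of a
(nondegenerate) triangle with vertices `A, B, C` equals its perimeter. -/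
theorem integral_width_triangle_eq_perimeter
    (A B C : EuclideanSpace ℝ (Fin 2))
    (h : ¬ Collinear ℝ ({A, B, C} : Set (EuclideanSpace ℝ (Fin 2)))) :
    ∫ θ in (0:ℝ)..π, width (convexHull ℝ {A, B, C}) θ =
      dist A B + dist B C + dist C A := by
  have h1 : ∫ θ in (0:ℝ)..π, width (convexHull ℝ {A, B, C}) θ =
      ∫ θ in (0:ℝ)..π, (|(inner ℝ (A - B) (dir θ) : ℝ)| + |(inner ℝ (B - C) (dir θ) : ℝ)| +
        |(inner ℝ (C - A) (dir θ) : ℝ)|) / 2 := by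
    apply intervalIntegral.integral_congr
    intro θ _
    exact width_triangle A B C θ
  rw [h1, intervalIntegral.integral_div,
    intervalIntegral.integral_add ((intble_abs_inner _).add (intble_abs_inner _))
      (intble_abs_inner _),
    intervalIntegral.integral_add (intble_abs_inner _) (intble_abs_inner _),
    integral_abs_inner, integral_abs_inner, integral_abs_inner,
    dist_eq_norm, dist_eq_norm, dist_eq_norm]
  ring
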